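/- arXiv:1807.10901 — 5 statements merged into one kernel-verified Lean document; each statement's English description precedes it below -/
import Mathlib

section
/- Let f ∈ ℝ[t] be a polynomial of degree two without real zeros. Let a = α(t−β)², c = α′(t−β′)², with α, α′, β, β′ ∈ ℝ and α, α′ ≠ 0, and let b ∈ ℝ[t] have degree at most two with b(β) = 0. Assume the product a·c is nonnegative on ℝ (equivalently α·α′ ≥ 0) and that f divides a·c − b² in ℝ[t]. Then b(β′) = 0. -/
/-!
Put `s = √(α α')`, so that `a c - b² = (P - b)(P + b)` with `P = s (t - β)(t - β')`.
A real quadratic without real zeros is irreducible, hence prime, so `f` divides `P - b` or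
`P + b`. Both have degree at most two and vanish at `β`, where `f` does not, so that factor is
divisible by the cubic `(t - β) f` and must be zero; hence `b = ±P` vanishes at `β'`.
-/

open Polynomial

namespace Polynomial

variable {K : Type*} [Field K]

theorem eq_zero_of_dvd_of_isRoot_of_natDegree_le {f g : K[X]} {x : K} (hfx : ¬ f.IsRoot x)
    (hfg : f ∣ g) (hgx : g.IsRoot x) (hdeg : g.natDegree ≤ f.natDegree) : g = 0 := by
  have hf0 : f ≠ 0 := by rintro rfl; simp at hfx
  have hcop : IsCoprime (X - C x) f :=
    (irreducible_X_sub_C x).coprime_iff_not_dvd.2 (mt dvd_iff_isRoot.1 hfx)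
  have hmul : (X - C x) * f ∣ g := hcop.mul_dvd (dvd_iff_isRoot.2 hgx) hfg
  refine eq_zero_of_dvd_of_natDegree_lt hmul ?_
  rw [natDegree_mul (X_sub_C_ne_zero x) hf0, natDegree_X_sub_C]
  omega

theorem isRoot_of_dvd_sq_sub_sq {f P b : K[X]} {β β' : K} (hf : Irreducible f)
    (hfβ : ¬ f.IsRoot β) (hP : P.natDegree ≤ f.natDegree) (hb : b.natDegree ≤ f.natDegree)
    (hPβ : P.IsRoot β) (hbβ : b.IsRoot β) (hPβ' : P.IsRoot β') (hdvd : f ∣ P ^ 2 - b ^ 2) :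
    b.IsRoot β' := by
  rw [sq_sub_sq] at hdvd
  rcases hf.prime.dvd_or_dvd hdvd with hsum | hdiff
  · have hsum0 : P + b = 0 :=
      eq_zero_of_dvd_of_isRoot_of_natDegree_le hfβ hsum (by simp_all [IsRoot])
        ((natDegree_add_le _ _).trans (max_le hP hb))
    rw [eq_neg_of_add_eq_zero_right hsum0]
    simpa [IsRoot] using hPβ'
  · have hdiff0 : P - b = 0 :=
      eq_zero_of_dvd_of_isRoot_of_natDegree_le hfβ hdiff (by simp_all [IsRoot])
        ((natDegree_sub_le _ _).trans (max_le hP hb))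
    rwa [← sub_eq_zero.1 hdiff0]

end Polynomial

theorem stmt_3_general (f b : Polynomial ℝ) (α α' β β' : ℝ)
    (hfdeg : f.natDegree = 2) (hfroots : ∀ t : ℝ, f.eval t ≠ 0)
    (hsign : 0 ≤ α * α')
    (hbdeg : b.natDegree ≤ 2) (hbβ : b.eval β = 0)
    (hdvd : f ∣ (Polynomial.C α * (Polynomial.X - Polynomial.C β) ^ 2) *
      (Polynomial.C α' * (Polynomial.X - Polynomial.C β') ^ 2) - b ^ 2) :
    b.eval β' = 0 := by
  have hf : Irreducible f :=
    irreducible_of_degree_le_three_of_not_isRoot (by simp [hfdeg]) hfroots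
  set P : ℝ[X] := C √(α * α') * ((X - C β) * (X - C β'))
  have hac : (C α * (X - C β) ^ 2) * (C α' * (X - C β') ^ 2) = P ^ 2 := by
    rw [mul_pow, ← C_pow, Real.sq_sqrt hsign, C_mul]
    ring
  have hPdeg : P.natDegree ≤ 2 :=
    (natDegree_C_mul_le _ _).trans (natDegree_mul_le.trans (by simp))
  rw [hac] at hdvd
  exact isRoot_of_dvd_sq_sub_sq hf (hfroots β) (hfdeg ▸ hPdeg) (hfdeg ▸ hbdeg) (by simp [P])
    hbβ (by simp [P]) hdvd

/-- Let `f ∈ ℝ[t]` have degree two and no real zeros, let `a = α(t - β)²` and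
`c = α′(t - β′)²` with `α, α′ ≠ 0` and `α·α′ ≥ 0`, and let `b` have degree at most two
with `b(β) = 0`.  If `f` divides `a·c - b²`, then `b(β′) = 0`. -/
theorem stmt_3 (f b : Polynomial ℝ) (α α' β β' : ℝ)
    (hfdeg : f.natDegree = 2) (hfroots : ∀ t : ℝ, f.eval t ≠ 0)
    (hα : α ≠ 0) (hα' : α' ≠ 0) (hsign : 0 ≤ α * α')
    (hbdeg : b.natDegree ≤ 2) (hbβ : b.eval β = 0)
    (hdvd : f ∣ (Polynomial.C α * (Polynomial.X - Polynomial.C β) ^ 2) *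
      (Polynomial.C α' * (Polynomial.X - Polynomial.C β') ^ 2) - b ^ 2) :
    b.eval β' = 0 :=
  stmt_3_general f b α α' β β' hfdeg hfroots hsign hbdeg hbβ hdvd
end

section
/- Let f, g ∈ ℝ[x₀,…,x_n] be homogeneous of degrees d ≥ 1 and d−1 respectively, with f(e) > 0 and g(e) > 0 for e = (1,0,…,0), and let B(f,g) be their Bézout matrix with entries in ℝ[x₁,…,x_n]. Then the evaluated matrix B(f,g)(x) is positive definite for every nonzero x ∈ ℝⁿ if and only if f is hyperbolic with respect to e and g strictly interlaces f with respect to e. -/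
/-!
For `x ∈ ℝⁿ` write `p = f(t, x)` and `q = g(t, x)`; specialising the entries of `B` at `x` gives
the Bézout matrix of `p` and `q`, and homogeneity makes `deg p = d`, `lc p = f(e)`,
`lc q = g(e)` independent of `x`. If `p` has distinct real roots `α₀ < ⋯ < α_{d-1}`, the
Bézout identity shows that `V B Vᵀ = diag (p'(α_k) q(α_k))` for the Vandermonde matrix `V` of
the roots, so `B` is positive definite iff `q(α_k)` has the sign of `p'(α_k)` for every `k`; as
`p'` alternates in sign along the roots, this says exactly that `q` strictly interlaces `p`.
Positive definiteness also forces the roots to be real (at a non-real root `z` the Hermitian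
form of `B` vanishes on `(z^i)ᵢ`) and simple (`p'(α) q(α)` is the form at `(α^i)ᵢ`). Moving the
line along `e` only translates all roots.
-/

open MvPolynomial Polynomial

/-- The univariate polynomial `t ↦ f(t • e + v)` obtained by restricting `f` to a line. -/
noncomputable def lineRestrict {n : ℕ} (f : MvPolynomial (Fin n) ℝ) (e v : Fin n → ℝ) :
    Polynomial ℝ :=
  MvPolynomial.aeval (fun i => Polynomial.C (e i) * Polynomial.X + Polynomial.C (v i)) f

/-- A univariate real polynomial has only real roots (counted with multiplicity). -/
def RealRooted (p : Polynomial ℝ) : Prop := p.roots.card = p.natDegree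

/-- `f` is hyperbolic with respect to `e`. -/
def Hyperbolic {n : ℕ} (f : MvPolynomial (Fin n) ℝ) (e : Fin n → ℝ) : Prop :=
  MvPolynomial.eval e f ≠ 0 ∧ ∀ v : Fin n → ℝ, RealRooted (lineRestrict f e v)

/-- `g` interlaces `f` (univariate real-rooted polynomials, `deg g = deg f - 1`). -/
def Interlaces (g f : Polynomial ℝ) : Prop :=
  f.natDegree = g.natDegree + 1 ∧
  ∃ (α : Fin (g.natDegree + 1) → ℝ) (β : Fin g.natDegree → ℝ),
    Monotone α ∧ Monotone β ∧
    f.roots = Finset.univ.val.map α ∧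
    g.roots = Finset.univ.val.map β ∧
    ∀ i : Fin g.natDegree, α i.castSucc ≤ β i ∧ β i ≤ α i.succ

/-- `g` strictly interlaces `f` (univariate). -/
def StrictlyInterlaces (g f : Polynomial ℝ) : Prop :=
  f.natDegree = g.natDegree + 1 ∧
  ∃ (α : Fin (g.natDegree + 1) → ℝ) (β : Fin g.natDegree → ℝ),
    Monotone α ∧ Monotone β ∧
    f.roots = Finset.univ.val.map α ∧
    g.roots = Finset.univ.val.map β ∧
    ∀ i : Fin g.natDegree, α i.castSucc < β i ∧ β i < α i.succ

/-- `g` interlaces `f` with respect to the direction `e`. -/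
def InterlacesWrt {n : ℕ} (g f : MvPolynomial (Fin n) ℝ) (e : Fin n → ℝ) : Prop :=
  ∀ v : Fin n → ℝ, Interlaces (lineRestrict g e v) (lineRestrict f e v)

/-- `g` strictly interlaces `f` with respect to the direction `e`. -/
def StrictlyInterlacesWrt {n : ℕ} (g f : MvPolynomial (Fin n) ℝ) (e : Fin n → ℝ) : Prop :=
  ∀ v : Fin n → ℝ, (∀ c : ℝ, v ≠ c • e) →
    StrictlyInterlaces (lineRestrict g e v) (lineRestrict f e v)

/-- The (closed) hyperbolicity cone of `f` with respect to `e`. -/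
def hypCone {n : ℕ} (f : MvPolynomial (Fin n) ℝ) (e : Fin n → ℝ) : Set (Fin n → ℝ) :=
  closure (connectedComponentIn {a : Fin n → ℝ | MvPolynomial.eval a f ≠ 0} e)

/-- Evaluation of the matrix pencil `xA + yB + zC` at a point `a ∈ ℝ³`. -/
def pencilEval {m : ℕ} (A B C : Matrix (Fin m) (Fin m) ℝ) (a : Fin 3 → ℝ) :
    Matrix (Fin m) (Fin m) ℝ :=
  a 0 • A + a 1 • B + a 2 • C

/-- The matrix pencil `xA + yB + zC` as a matrix of linear forms. -/
noncomputable def pencilPoly {m : ℕ} (A B C : Matrix (Fin m) (Fin m) ℝ) :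
    Matrix (Fin m) (Fin m) (MvPolynomial (Fin 3) ℝ) :=
  Matrix.of fun i j =>
    MvPolynomial.C (A i j) * MvPolynomial.X 0 + MvPolynomial.C (B i j) * MvPolynomial.X 1 +
      MvPolynomial.C (C i j) * MvPolynomial.X 2

/-- `B` is the Bézout matrix of `f` and `g` (with `deg f = d`): writing `s` for the outer
and `t` for the inner polynomial variable, it satisfies
`f(s)g(t) - f(t)g(s) = (s - t) · Σ_{i,j=1}^{d} B_{ij} s^{i-1} t^{j-1}`. -/
def IsBezoutMat {R : Type*} [CommRing R] (d : ℕ) (f g : Polynomial R)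
    (B : Matrix (Fin d) (Fin d) R) : Prop :=
  Polynomial.eval₂ (Polynomial.C.comp Polynomial.C) Polynomial.X f *
      Polynomial.eval₂ (Polynomial.C.comp Polynomial.C) (Polynomial.C Polynomial.X) g -
    Polynomial.eval₂ (Polynomial.C.comp Polynomial.C) (Polynomial.C Polynomial.X) f *
      Polynomial.eval₂ (Polynomial.C.comp Polynomial.C) Polynomial.X g =
  (Polynomial.X - Polynomial.C Polynomial.X) *
    ∑ i : Fin d, ∑ j : Fin d,
      Polynomial.C (Polynomial.C (B i j)) * Polynomial.X ^ (i : ℕ) *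
        Polynomial.C Polynomial.X ^ (j : ℕ)

open Matrix

def powVec {R : Type*} [Monoid R] (d : ℕ) (a : R) : Fin d → R := fun i => a ^ (i : ℕ)

section Bezout
variable {R S : Type*} [CommRing R] [CommRing S]

lemma hom_eval₂_C_comp_C {T : Type*} [CommRing T] (ψ : R[X][X] →+* T) {φ : R →+* T}
    (hψ : ∀ r, ψ (Polynomial.C (Polynomial.C r)) = φ r) (y : R[X][X]) (f : R[X]) :
    ψ (Polynomial.eval₂ (Polynomial.C.comp Polynomial.C) y f) = Polynomial.eval₂ φ (ψ y) f := by
  rw [Polynomial.hom_eval₂]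
  congr 1
  ext r
  exact hψ r

variable {d : ℕ} {f g : R[X]} {B : Matrix (Fin d) (Fin d) R}

lemma IsBezoutMat.map (hB : IsBezoutMat d f g B) (φ : R →+* S) :
    IsBezoutMat d (f.map φ) (g.map φ) (B.map φ) := by
  have hψ (r : R) : mapRingHom (mapRingHom φ) (Polynomial.C (Polynomial.C r)) =
      (Polynomial.C.comp Polynomial.C).comp φ r := by simp
  have := congrArg (mapRingHom (mapRingHom φ)) hB
  simpa only [IsBezoutMat, map_sub, map_mul, map_sum, map_pow, hom_eval₂_C_comp_C _ hψ,
    Polynomial.eval₂_map, coe_mapRingHom, Polynomial.map_X, Polynomial.map_C, Matrix.map_apply]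
    using this

lemma powVec_dotProduct_mulVec_powVec (a b : R) :
    powVec d a ⬝ᵥ B *ᵥ powVec d b = ∑ i, ∑ j, B i j * a ^ (i : ℕ) * b ^ (j : ℕ) := by
  simp [powVec, dotProduct, mulVec, Finset.mul_sum, mul_assoc, mul_left_comm]

lemma IsBezoutMat.eval_mul_eval_sub (hB : IsBezoutMat d f g B) (a b : R) :
    f.eval a * g.eval b - f.eval b * g.eval a = (a - b) * (powVec d a ⬝ᵥ B *ᵥ powVec d b) := by
  have hψ (r : R) : evalEvalRingHom b a (Polynomial.C (Polynomial.C r)) = RingHom.id R r := by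
    simp
  have := congrArg (evalEvalRingHom b a) hB
  simp only [map_sub, map_mul, map_sum, map_pow, hom_eval₂_C_comp_C _ hψ,
    Polynomial.eval₂_id] at this
  simpa [powVec_dotProduct_mulVec_powVec] using this

lemma IsBezoutMat.derivative_eval_mul_eval (hB : IsBezoutMat d f g B) {a : R}
    (ha : f.eval a = 0) :
    (derivative f).eval a * g.eval a = powVec d a ⬝ᵥ B *ᵥ powVec d a := by
  have hψ (r : R) : mapRingHom (evalRingHom a) (Polynomial.C (Polynomial.C r)) =
      Polynomial.C r := by simp
  -- specialise the inner variable to `a`, then differentiate in the outer one at `a`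
  have := congrArg (fun P => (derivative (mapRingHom (evalRingHom a) P)).eval a) hB
  simp only [map_sub, map_mul, map_sum, map_pow, hom_eval₂_C_comp_C _ hψ] at this
  simpa [powVec_dotProduct_mulVec_powVec, eval₂_at_apply, ha, eval_finsetSum] using this

end Bezout

lemma vandermonde_mul_mul_transpose_apply {R : Type*} [CommRing R] {d : ℕ} (α : Fin d → R)
    (B : Matrix (Fin d) (Fin d) R) (k l : Fin d) :
    (vandermonde α * B * (vandermonde α)ᵀ) k l = powVec d (α k) ⬝ᵥ B *ᵥ powVec d (α l) := by
  simp only [mul_apply, transpose_apply, vandermonde_apply, dotProduct, mulVec, powVec,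
    Finset.sum_mul, Finset.mul_sum]
  rw [Finset.sum_comm]
  simp only [mul_assoc, mul_left_comm]

lemma IsBezoutMat.posDef_iff {d : ℕ} {p q : ℝ[X]} {B : Matrix (Fin d) (Fin d) ℝ}
    (hB : IsBezoutMat d p q B) {α : Fin d → ℝ} (hα : Function.Injective α)
    (hroot : ∀ k, p.eval (α k) = 0) :
    B.PosDef ↔ ∀ k, 0 < (derivative p).eval (α k) * q.eval (α k) := by
  have hV : IsUnit (vandermonde α) := by
    rw [isUnit_iff_isUnit_det, isUnit_iff_ne_zero]
    exact det_vandermonde_ne_zero_iff.mpr hα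
  have hdiag : vandermonde α * B * star (vandermonde α) =
      diagonal fun k => (derivative p).eval (α k) * q.eval (α k) := by
    ext k l
    rw [star_eq_conjTranspose, conjTranspose_eq_transpose_of_trivial,
      vandermonde_mul_mul_transpose_apply]
    by_cases hkl : k = l
    · subst hkl
      rw [diagonal_apply_eq, hB.derivative_eval_mul_eval (hroot k)]
    · have h := hB.eval_mul_eval_sub (α k) (α l)
      rw [hroot k, hroot l, zero_mul, zero_mul, sub_zero, zero_eq_mul] at h
      rw [diagonal_apply_ne _ hkl, h.resolve_left (sub_ne_zero.mpr (hα.ne hkl))]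
  rw [← hV.posDef_star_right_conjugate_iff, hdiag, posDef_diagonal_iff]

lemma IsBezoutMat.derivative_eval_mul_eval_pos {d : ℕ} {p q : ℝ[X]}
    {B : Matrix (Fin d) (Fin d) ℝ} (hB : IsBezoutMat d p q B) (hd : 0 < d) (hpos : B.PosDef)
    {t : ℝ} (ht : p.eval t = 0) : 0 < (derivative p).eval t * q.eval t := by
  have hv : powVec d t ≠ 0 := fun h => by simpa [powVec] using congrFun h ⟨0, hd⟩
  simpa [hB.derivative_eval_mul_eval ht] using hpos.dotProduct_mulVec_pos hv

lemma re_star_dotProduct_map_ofReal_mulVec {ι : Type*} [Fintype ι] (B : Matrix ι ι ℝ)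
    (v : ι → ℂ) :
    (star v ⬝ᵥ B.map (↑) *ᵥ v).re =
      (fun i => (v i).re) ⬝ᵥ B *ᵥ (fun i => (v i).re) +
        (fun i => (v i).im) ⬝ᵥ B *ᵥ (fun i => (v i).im) := by
  simp only [dotProduct, mulVec, Complex.re_sum, Finset.mul_sum, ← Finset.sum_add_distrib]
  refine Finset.sum_congr rfl fun i _ => Finset.sum_congr rfl fun j _ => ?_
  simp

open ComplexConjugate in
lemma IsBezoutMat.im_eq_zero_of_posDef {d : ℕ} {p q : ℝ[X]} {B : Matrix (Fin d) (Fin d) ℝ}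
    (hB : IsBezoutMat d p q B) (hd : 0 < d) (hpos : B.PosDef) {z : ℂ} (hz : aeval z p = 0) :
    z.im = 0 := by
  by_contra him
  -- `conj z` is a root too, so the Bézout identity at `(conj z, z)` kills the form at `(z ^ i)ᵢ`
  set v := powVec d z
  have hconj : powVec d (conj z) = star v := by
    ext i
    simp [v, powVec]
  have hform : star v ⬝ᵥ B.map (↑) *ᵥ v = 0 := by
    have h := (hB.map (algebraMap ℝ ℂ)).eval_mul_eval_sub (conj z) z
    simp only [eval_map_algebraMap, aeval_conj, hz, map_zero, zero_mul, sub_zero,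
      zero_eq_mul, hconj] at h
    refine h.resolve_left fun h' => him ?_
    exact Complex.conj_eq_iff_im.mp (sub_eq_zero.mp h')
  have hre : (fun i => (v i).re) ≠ 0 := fun h => by
    simpa [v, powVec] using congrFun h ⟨0, hd⟩
  have := re_star_dotProduct_map_ofReal_mulVec B v
  rw [hform, Complex.zero_re] at this
  have h1 := hpos.dotProduct_mulVec_pos hre
  have h2 := hpos.posSemidef.dotProduct_mulVec_nonneg (fun i => (v i).im)
  simp only [star_trivial] at h1 h2
  linarith

lemma realRooted_iff_splits (p : ℝ[X]) : RealRooted p ↔ p.Splits :=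
  splits_iff_card_roots.symm

lemma realRooted_of_forall_aeval_eq_zero {p : ℝ[X]} (h : ∀ z : ℂ, aeval z p = 0 → z.im = 0) :
    RealRooted p := by
  rw [realRooted_iff_splits]
  refine Splits.of_splits_map_of_injective (algebraMap ℝ ℂ).injective (IsAlgClosed.splits _)
    fun z hz => ⟨z.re, Complex.ext rfl ?_⟩
  rw [mem_roots', IsRoot, eval_map_algebraMap] at hz
  simp [h z hz.2]

lemma Multiset.Nodup.exists_strictMono_eq_map {α : Type*} [LinearOrder α] {s : Multiset α}
    (hs : s.Nodup) {m : ℕ} (hm : s.card = m) :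
    ∃ a : Fin m → α, StrictMono a ∧ s = Finset.univ.val.map a := by
  classical
  have h : s.toFinset.card = m := by rwa [Multiset.toFinset_card_of_nodup hs]
  refine ⟨s.toFinset.orderEmbOfFin h, (s.toFinset.orderEmbOfFin h).strictMono, ?_⟩
  have := congrArg Finset.val (s.toFinset.map_orderEmbOfFin_univ h)
  rw [Finset.map_val, Multiset.toFinset_val, Multiset.dedup_eq_self.mpr hs] at this
  exact this.symm

lemma eval_derivative_prod_X_sub_C {R : Type*} [CommRing R] {m : ℕ} (α : Fin (m + 1) → R)
    (k : Fin (m + 1)) :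
    (derivative (∏ j, (Polynomial.X - Polynomial.C (α j)))).eval (α k) =
      ∏ j, (α k - α (k.succAbove j)) := by
  rw [Fin.prod_univ_succAbove _ k, derivative_mul]
  simp [Polynomial.eval_prod]

section RootEnumeration
variable {R : Type*} [CommRing R] [IsDomain R] {m : ℕ}

lemma nodup_roots_of_forall_eval_derivative_ne_zero {p : R[X]} (hp : p ≠ 0)
    (h : ∀ t, p.eval t = 0 → (derivative p).eval t ≠ 0) : p.roots.Nodup := by
  classical
  refine Multiset.nodup_iff_count_le_one.mpr fun t => ?_
  rw [count_roots]
  by_contra! ht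
  obtain ⟨h₁, h₂⟩ := (one_lt_rootMultiplicity_iff_isRoot hp).mp ht
  exact h t h₁ h₂

lemma eq_C_leadingCoeff_mul_prod_X_sub_C {p : R[X]} {α : Fin m → R}
    (hroots : p.roots = Finset.univ.val.map α) (hdeg : p.natDegree = m) :
    p = Polynomial.C p.leadingCoeff * ∏ j, (Polynomial.X - Polynomial.C (α j)) := by
  have hcard : p.roots.card = p.natDegree := by simp [hroots, hdeg]
  conv_lhs => rw [← C_leadingCoeff_mul_prod_multiset_X_sub_C hcard, hroots, Multiset.map_map]
  rfl

lemma eval_derivative_of_roots_eq {p : R[X]} {α : Fin (m + 1) → R}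
    (hroots : p.roots = Finset.univ.val.map α) (hdeg : p.natDegree = m + 1) (k : Fin (m + 1)) :
    (derivative p).eval (α k) = p.leadingCoeff * ∏ j, (α k - α (k.succAbove j)) := by
  conv_lhs => rw [eq_C_leadingCoeff_mul_prod_X_sub_C hroots hdeg]
  rw [derivative_C_mul, Polynomial.eval_mul, Polynomial.eval_C, eval_derivative_prod_X_sub_C]

lemma eval_of_roots_eq {q : R[X]} {β : Fin m → R}
    (hroots : q.roots = Finset.univ.val.map β) (hdeg : q.natDegree = m) (t : R) :
    q.eval t = q.leadingCoeff * ∏ j, (t - β j) := by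
  conv_lhs => rw [eq_C_leadingCoeff_mul_prod_X_sub_C hroots hdeg]
  simp [Polynomial.eval_prod]

lemma eval_eq_zero_of_roots_eq {p : R[X]} (hp : p ≠ 0) {α : Fin m → R}
    (hroots : p.roots = Finset.univ.val.map α) (k : Fin m) : p.eval (α k) = 0 :=
  (mem_roots hp).mp (hroots ▸ Multiset.mem_map_of_mem _ (Finset.mem_univ_val k))

lemma roots_eq_map_of_eval_eq_zero {q : R[X]} (hq : q ≠ 0) (hdeg : q.natDegree = m)
    {β : Fin m → R} (hβ : Function.Injective β) (hroot : ∀ i, q.eval (β i) = 0) :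
    q.roots = Finset.univ.val.map β := by
  have hle : Finset.univ.val.map β ≤ q.roots :=
    (Multiset.le_iff_subset (Finset.univ.nodup.map hβ)).mpr fun t ht => by
      obtain ⟨i, -, rfl⟩ := Multiset.mem_map.mp ht
      exact (mem_roots hq).mpr (hroot i)
  refine (Multiset.eq_of_le_of_card_le hle ?_).symm
  simpa [hdeg] using q.card_roots'

lemma roots_comp_X_add_C (p : R[X]) (c : R) :
    (p.comp (Polynomial.X + Polynomial.C c)).roots = p.roots.map (· - c) := by
  simpa [sub_eq_add_neg] using p.roots_comp_C_mul_X_add_C 1 c isUnit_one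

end RootEnumeration

lemma exists_eval_eq_zero_of_eval_mul_eval_neg {q : ℝ[X]} {a b : ℝ} (hab : a ≤ b)
    (h : q.eval a * q.eval b < 0) : ∃ c ∈ Set.Ioo a b, q.eval c = 0 := by
  have hq : ContinuousOn (fun x => q.eval x) (Set.Icc a b) := q.continuous.continuousOn
  rcases mul_neg_iff.mp h with ⟨ha, hb⟩ | ⟨ha, hb⟩
  · exact intermediate_value_Ioo' hab hq ⟨hb, ha⟩
  · exact intermediate_value_Ioo hab hq ⟨ha, hb⟩

section Signs
variable {m : ℕ} {α : Fin (m + 1) → ℝ}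

lemma prod_succAbove_mul_pos_of_interlace (hα : Monotone α) {γ : Fin m → ℝ}
    (hγ : ∀ j, α j.castSucc < γ j ∧ γ j < α j.succ) (k : Fin (m + 1)) :
    0 < ∏ j, (α k - α (k.succAbove j)) * (α k - γ j) := by
  -- `α (k.succAbove j)` and `γ j` lie on the same side of `α k`
  refine Finset.prod_pos fun j _ => ?_
  obtain ⟨h₁, h₂⟩ := hγ j
  rcases lt_or_ge j.castSucc k with hjk | hkj
  · have : α j.succ ≤ α k := hα (Fin.castSucc_lt_iff_succ_le.mp hjk)
    rw [k.succAbove_of_castSucc_lt j hjk]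
    exact mul_pos (by linarith) (by linarith)
  · have : α k ≤ α j.castSucc := hα hkj
    rw [k.succAbove_of_le_castSucc j hkj]
    exact mul_pos_of_neg_of_neg (by linarith) (by linarith)

lemma prod_succAbove_castSucc_mul_prod_succAbove_succ_neg (hα : StrictMono α) (i : Fin m) :
    (∏ j, (α i.castSucc - α (i.castSucc.succAbove j))) *
      ∏ j, (α i.succ - α (i.succ.succAbove j)) < 0 := by
  rw [← Finset.prod_mul_distrib, ← Finset.mul_prod_erase _ _ (Finset.mem_univ i)]
  refine mul_neg_of_neg_of_pos ?_ (Finset.prod_pos fun j hj => ?_)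
  · rw [i.castSucc.succAbove_of_le_castSucc i le_rfl,
      i.succ.succAbove_of_castSucc_lt i (Fin.castSucc_lt_succ)]
    have := hα (Fin.castSucc_lt_succ (i := i))
    nlinarith
  · have hlt {a b : Fin (m + 1)} (h : (a : ℕ) < b) : α a < α b := hα h
    rcases lt_or_gt_of_ne (Finset.ne_of_mem_erase hj) with hji | hij
    · rw [i.castSucc.succAbove_of_castSucc_lt j (by rw [Fin.lt_def]; simpa),
        i.succ.succAbove_of_castSucc_lt j (by rw [Fin.lt_def]; simp; omega)]
      have h₁ : α j.castSucc < α i.castSucc := hlt (by simpa)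
      have h₂ : α j.castSucc < α i.succ := hlt (by simp; omega)
      exact mul_pos (by linarith) (by linarith)
    · rw [i.castSucc.succAbove_of_le_castSucc j (by rw [Fin.le_def]; simp; omega),
        i.succ.succAbove_of_le_castSucc j (by rw [Fin.le_def]; simp; omega)]
      have h₁ : α i.castSucc < α j.succ := hlt (by simp; omega)
      have h₂ : α i.succ < α j.succ := hlt (by simpa)
      exact mul_pos_of_neg_of_neg (by linarith) (by linarith)

end Signs

lemma IsBezoutMat.posDef_of_strictlyInterlaces {m : ℕ} {p q : ℝ[X]}
    {B : Matrix (Fin (m + 1)) (Fin (m + 1)) ℝ} (hB : IsBezoutMat (m + 1) p q B)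
    (hq : q.natDegree = m) (hlp : 0 < p.leadingCoeff) (hlq : 0 < q.leadingCoeff)
    (h : StrictlyInterlaces q p) : B.PosDef := by
  subst hq
  obtain ⟨hdeg, α, β, hαm, -, hpr, hqr, hαβ⟩ := h
  have hα : StrictMono α := Fin.strictMono_iff_lt_succ.mpr fun i => (hαβ i).1.trans (hαβ i).2
  have hp0 : p ≠ 0 := leadingCoeff_ne_zero.mp hlp.ne'
  rw [hB.posDef_iff hα.injective (eval_eq_zero_of_roots_eq hp0 hpr)]
  intro k
  have hpair := prod_succAbove_mul_pos_of_interlace hαm hαβ k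
  rw [Finset.prod_mul_distrib] at hpair
  rw [eval_derivative_of_roots_eq hpr hdeg, eval_of_roots_eq hqr rfl]
  have := mul_pos (mul_pos hlp hlq) hpair
  linarith

lemma IsBezoutMat.strictlyInterlaces_of_posDef {m : ℕ} {p q : ℝ[X]}
    {B : Matrix (Fin (m + 1)) (Fin (m + 1)) ℝ} (hB : IsBezoutMat (m + 1) p q B)
    (hp : p.natDegree = m + 1) (hq : q.natDegree = m) (hpos : B.PosDef) :
    StrictlyInterlaces q p := by
  subst hq
  have hp0 : p ≠ 0 := ne_zero_of_natDegree_gt (n := 0) (by omega)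
  have hD := fun t => hB.derivative_eval_mul_eval_pos (Nat.succ_pos _) hpos (t := t)
  have hreal : RealRooted p :=
    realRooted_of_forall_aeval_eq_zero fun z => hB.im_eq_zero_of_posDef (Nat.succ_pos _) hpos
  have hnodup : p.roots.Nodup := nodup_roots_of_forall_eval_derivative_ne_zero hp0
    fun t ht => left_ne_zero_of_mul (hD t ht).ne'
  obtain ⟨α, hα, hpr⟩ := hnodup.exists_strictMono_eq_map (hreal.trans hp)
  have hpα := eval_eq_zero_of_roots_eq hp0 hpr
  -- `p'` alternates in sign along the roots, while `p' q > 0` at each of them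
  have hsign (i : Fin q.natDegree) : q.eval (α i.castSucc) * q.eval (α i.succ) < 0 := by
    have h₁ := hD _ (hpα i.castSucc)
    have h₂ := hD _ (hpα i.succ)
    rw [eval_derivative_of_roots_eq hpr hp] at h₁ h₂
    have hS := prod_succAbove_castSucc_mul_prod_succAbove_succ_neg hα i
    have hlc : 0 < p.leadingCoeff ^ 2 := pow_two_pos_of_ne_zero (leadingCoeff_ne_zero.mpr hp0)
    have h₁₂ := mul_pos h₁ h₂
    rw [show ∀ a P₁ P₂ q₁ q₂ : ℝ, a * P₁ * q₁ * (a * P₂ * q₂) = a ^ 2 * (P₁ * P₂) * (q₁ * q₂) by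
      intros; ring] at h₁₂
    exact neg_of_mul_pos_right h₁₂ (mul_neg_of_pos_of_neg hlc hS).le
  choose β hβ hqβ using fun i => exists_eval_eq_zero_of_eval_mul_eval_neg
    (hα (Fin.castSucc_lt_succ (i := i))).le (hsign i)
  have hβm : StrictMono β := fun i j hij =>
    (hβ i).2.trans <| (hα.monotone (Fin.succ_le_castSucc_iff.mpr hij)).trans_lt (hβ j).1
  have hq0 : q ≠ 0 := fun h => by simpa [h] using hD _ (hpα 0)
  exact ⟨hp, α, β, hα.monotone, hβm.monotone, hpr,
    roots_eq_map_of_eval_eq_zero hq0 rfl hβm.injective hqβ, fun i => hβ i⟩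

lemma RealRooted.comp_X_add_C {p : ℝ[X]} (h : RealRooted p) (c : ℝ) :
    RealRooted (p.comp (Polynomial.X + Polynomial.C c)) := by
  simpa [RealRooted, roots_comp_X_add_C, natDegree_comp] using h

lemma realRooted_C_mul_X_pow {a : ℝ} (ha : a ≠ 0) (d : ℕ) :
    RealRooted (Polynomial.C a * Polynomial.X ^ d) := by
  simp [RealRooted, roots_C_mul_X_pow ha, natDegree_C_mul_X_pow d a ha]

lemma StrictlyInterlaces.of_roots_eq {p q : ℝ[X]} {m : ℕ} (hq : q.natDegree = m)
    (hp : p.natDegree = m + 1) {α : Fin (m + 1) → ℝ} {β : Fin m → ℝ} (hα : Monotone α)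
    (hβ : Monotone β) (hpr : p.roots = Finset.univ.val.map α)
    (hqr : q.roots = Finset.univ.val.map β)
    (hαβ : ∀ i, α i.castSucc < β i ∧ β i < α i.succ) : StrictlyInterlaces q p := by
  subst hq
  exact ⟨hp, α, β, hα, hβ, hpr, hqr, hαβ⟩

lemma StrictlyInterlaces.realRooted {p q : ℝ[X]} (h : StrictlyInterlaces q p) : RealRooted p := by
  obtain ⟨hp, α, -, -, -, hpr, -⟩ := h
  simp [RealRooted, hpr, hp]

lemma StrictlyInterlaces.comp_X_add_C {p q : ℝ[X]} (h : StrictlyInterlaces q p) (c : ℝ) :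
    StrictlyInterlaces (q.comp (Polynomial.X + Polynomial.C c))
      (p.comp (Polynomial.X + Polynomial.C c)) := by
  obtain ⟨hp, α, β, hα, hβ, hpr, hqr, hαβ⟩ := h
  refine .of_roots_eq (by simp [natDegree_comp]) (by simp [natDegree_comp, hp])
    (fun _ _ h => sub_le_sub_right (hα h) c) (fun _ _ h => sub_le_sub_right (hβ h) c)
    (by rw [roots_comp_X_add_C, hpr, Multiset.map_map]; rfl)
    (by rw [roots_comp_X_add_C, hqr, Multiset.map_map]; rfl)
    fun i => ⟨sub_lt_sub_right (hαβ i).1 c, sub_lt_sub_right (hαβ i).2 c⟩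

namespace MvPolynomial.IsHomogeneous
variable {n d : ℕ} {f : MvPolynomial (Fin (n + 1)) ℝ}

lemma natDegree_finSuccEquiv_le (hf : f.IsHomogeneous d) :
    (finSuccEquiv ℝ n f).natDegree ≤ d := by
  rw [natDegree_finSuccEquiv]
  exact (degreeOf_le_totalDegree f 0).trans hf.totalDegree_le

lemma eval_zero_coeff_finSuccEquiv (hf : f.IsHomogeneous d) {i : ℕ} (hi : i < d) :
    MvPolynomial.eval 0 ((finSuccEquiv ℝ n f).coeff i) = 0 := by
  rw [MvPolynomial.eval_zero, constantCoeff_eq]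
  exact (hf.finSuccEquiv_coeff_isHomogeneous i (d - i) (by omega)).coeff_eq_zero (by simp; omega)

lemma map_eval_zero_finSuccEquiv (hf : f.IsHomogeneous d) :
    (finSuccEquiv ℝ n f).map (MvPolynomial.eval 0) =
      Polynomial.C (MvPolynomial.eval (Fin.cons 1 0) f) * Polynomial.X ^ d := by
  obtain ⟨a, ha⟩ : ∃ a, (finSuccEquiv ℝ n f).coeff d = MvPolynomial.C a :=
    ⟨_, totalDegree_eq_zero_iff_eq_C.mp
      ((totalDegree_zero_iff_isHomogeneous _).mpr (hf.finSuccEquiv_coeff_isHomogeneous d 0 rfl))⟩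
  have hmap :
      (finSuccEquiv ℝ n f).map (MvPolynomial.eval 0) = Polynomial.C a * Polynomial.X ^ d := by
    ext i
    rw [Polynomial.coeff_map, coeff_C_mul_X_pow]
    rcases lt_trichotomy i d with hi | rfl | hi
    · rw [if_neg hi.ne, hf.eval_zero_coeff_finSuccEquiv hi]
    · rw [if_pos rfl, ha, MvPolynomial.eval_C]
    · rw [if_neg hi.ne', coeff_eq_zero_of_natDegree_lt (hf.natDegree_finSuccEquiv_le.trans_lt hi),
        map_zero]
  have : a = MvPolynomial.eval (Fin.cons 1 0) f := by
    rw [eval_eq_eval_mv_eval', hmap]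
    simp
  rw [hmap, this]

lemma coeff_finSuccEquiv_self (hf : f.IsHomogeneous d) :
    (finSuccEquiv ℝ n f).coeff d = MvPolynomial.C (MvPolynomial.eval (Fin.cons 1 0) f) := by
  rw [totalDegree_eq_zero_iff_eq_C.mp
    ((totalDegree_zero_iff_isHomogeneous _).mpr (hf.finSuccEquiv_coeff_isHomogeneous d 0 rfl))]
  have := congrArg (Polynomial.coeff · d) hf.map_eval_zero_finSuccEquiv
  simpa [MvPolynomial.eval_zero, constantCoeff_eq] using this

lemma natDegree_map_eval_finSuccEquiv (hf : f.IsHomogeneous d)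
    (he : MvPolynomial.eval (Fin.cons 1 0) f ≠ 0) (x : Fin n → ℝ) :
    ((finSuccEquiv ℝ n f).map (MvPolynomial.eval x)).natDegree = d :=
  natDegree_eq_of_le_of_coeff_ne_zero (natDegree_map_le.trans hf.natDegree_finSuccEquiv_le)
    (by rwa [Polynomial.coeff_map, hf.coeff_finSuccEquiv_self, MvPolynomial.eval_C])

lemma leadingCoeff_map_eval_finSuccEquiv (hf : f.IsHomogeneous d)
    (he : MvPolynomial.eval (Fin.cons 1 0) f ≠ 0) (x : Fin n → ℝ) :
    ((finSuccEquiv ℝ n f).map (MvPolynomial.eval x)).leadingCoeff =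
      MvPolynomial.eval (Fin.cons 1 0) f := by
  rw [leadingCoeff, hf.natDegree_map_eval_finSuccEquiv he, Polynomial.coeff_map,
    hf.coeff_finSuccEquiv_self, MvPolynomial.eval_C]

end MvPolynomial.IsHomogeneous

lemma MvPolynomial.polynomial_eval_aeval {σ : Type*} (g : σ → ℝ[X]) (f : MvPolynomial σ ℝ)
    (t : ℝ) : (aeval g f).eval t = MvPolynomial.eval (fun i => (g i).eval t) f := by
  rw [← coe_evalRingHom, map_aeval, coe_eval₂Hom, MvPolynomial.eval]
  congr 1
  ext r
  simp

lemma lineRestrict_cons_one_zero {n : ℕ} (f : MvPolynomial (Fin (n + 1)) ℝ)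
    (v : Fin (n + 1) → ℝ) :
    lineRestrict f (Fin.cons 1 0) v =
      ((finSuccEquiv ℝ n f).map (MvPolynomial.eval (Fin.tail v))).comp
        (Polynomial.X + Polynomial.C (v 0)) := by
  refine Polynomial.funext fun t => ?_
  rw [lineRestrict, polynomial_eval_aeval, eval_comp, Polynomial.eval_add, Polynomial.eval_X,
    Polynomial.eval_C, ← eval_eq_eval_mv_eval']
  refine congrArg (MvPolynomial.eval · f) (funext fun i => ?_)
  refine Fin.cases ?_ (fun j => ?_) i <;> simp [Fin.tail]

lemma exists_eq_smul_cons_one_zero_iff {n : ℕ} (v : Fin (n + 1) → ℝ) :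
    (∃ c : ℝ, v = c • Fin.cons 1 0) ↔ Fin.tail v = 0 := by
  constructor
  · rintro ⟨c, rfl⟩
    ext j
    simp [Fin.tail]
  · intro h
    refine ⟨v 0, funext fun i => Fin.cases (by simp) (fun j => ?_) i⟩
    simpa [Fin.tail] using congrFun h j

/-- Pointwise definiteness of the multivariate Bézout matrix.
For homogeneous `f, g` of degrees `d` and `d - 1` with `f(e) > 0 < g(e)` at
`e = (1,0,…,0)`, the Bézout matrix `B(f,g)` (entries in `ℝ[x₁,…,x_n]`) is positive
definite at every `0 ≠ x ∈ ℝⁿ` iff `f` is hyperbolic w.r.t. `e` and `g` strictly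
interlaces `f` w.r.t. `e`. -/
theorem stmt_10 (n d : ℕ) (hd : 1 ≤ d) (f g : MvPolynomial (Fin (n + 1)) ℝ)
    (e : Fin (n + 1) → ℝ) (he : e = fun i => if i = 0 then 1 else 0)
    (hfhom : f.IsHomogeneous d) (hghom : g.IsHomogeneous (d - 1))
    (hfe : 0 < MvPolynomial.eval e f) (hge : 0 < MvPolynomial.eval e g)
    (B : Matrix (Fin d) (Fin d) (MvPolynomial (Fin n) ℝ))
    (hB : IsBezoutMat d (MvPolynomial.finSuccEquiv ℝ n f) (MvPolynomial.finSuccEquiv ℝ n g) B) :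
    (∀ x : Fin n → ℝ, x ≠ 0 → (B.map (MvPolynomial.eval x)).PosDef) ↔
      (Hyperbolic f e ∧ StrictlyInterlacesWrt g f e) := by
  obtain ⟨m, rfl⟩ : ∃ m, d = m + 1 := ⟨d - 1, by omega⟩
  obtain rfl : e = Fin.cons 1 0 := he.trans (funext fun i => Fin.cases rfl (fun _ => rfl) i)
  replace hghom : g.IsHomogeneous m := hghom
  have hcore (x : Fin n → ℝ) : (B.map (MvPolynomial.eval x)).PosDef ↔
      StrictlyInterlaces ((finSuccEquiv ℝ n g).map (MvPolynomial.eval x))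
        ((finSuccEquiv ℝ n f).map (MvPolynomial.eval x)) :=
    ⟨(hB.map _).strictlyInterlaces_of_posDef (hfhom.natDegree_map_eval_finSuccEquiv hfe.ne' x)
        (hghom.natDegree_map_eval_finSuccEquiv hge.ne' x),
      (hB.map _).posDef_of_strictlyInterlaces (hghom.natDegree_map_eval_finSuccEquiv hge.ne' x)
        (by rwa [hfhom.leadingCoeff_map_eval_finSuccEquiv hfe.ne'])
        (by rwa [hghom.leadingCoeff_map_eval_finSuccEquiv hge.ne'])⟩
  simp only [hcore, Hyperbolic, StrictlyInterlacesWrt, lineRestrict_cons_one_zero]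
  constructor
  · intro h
    refine ⟨⟨hfe.ne', fun v => ?_⟩, fun v hv => ?_⟩
    · refine RealRooted.comp_X_add_C ?_ _
      by_cases hv : Fin.tail v = 0
      · rw [hv, hfhom.map_eval_zero_finSuccEquiv]
        exact realRooted_C_mul_X_pow hfe.ne' _
      · exact (h _ hv).realRooted
    · refine (h _ ?_).comp_X_add_C _
      rw [Ne, ← exists_eq_smul_cons_one_zero_iff]
      exact not_exists.mpr hv
  · rintro ⟨-, h⟩ x hx
    have := h (Fin.cons 0 x) fun c hc => hx <| by
      simpa using (exists_eq_smul_cons_one_zero_iff _).mp ⟨c, hc⟩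
    simpa using this
end

section
/- Let q ∈ ℝ[x,y,z] be a nonzero square-free polynomial and let N be an n×n matrix with entries in ℝ[x,y,z] such that q divides every 2×2 minor of N. Then for every k with 2 ≤ k ≤ n, q^{k−1} divides every k×k minor of N; in particular q^{n−1} divides det(N). -/
/-!
Factor the square-free `q` into pairwise non-associated primes; it suffices to show
`p ^ (k - 1) ∣ det M` for each prime `p ∣ q`. If `p` divides every entry this is clear.
Otherwise pick an entry `c = M i₀ j₀` with `p ∤ c`. Scaling every row `i ≠ i₀` by `c` and
subtracting `M i j₀` times row `i₀` multiplies `det M` by `c ^ (k - 1)` and turns each of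
those `k - 1` rows into a row of `2 × 2` minors, all divisible by `p`. Hence
`p ^ (k - 1) ∣ c ^ (k - 1) * det M`, and `p ∤ c` gives the claim.
-/

open Function

theorem Squarefree.pow_dvd_of_forall_prime_dvd {R : Type*} [CommMonoidWithZero R]
    [UniqueFactorizationMonoid R] {q x : R} (hq : Squarefree q) (m : ℕ)
    (h : ∀ p, Prime p → p ∣ q → p ^ m ∣ x) : q ^ m ∣ x := by
  induction q using WfDvdMonoid.induction_on_irreducible with
  | zero => exact ((hq 0 (dvd_zero _)).pow m).dvd
  | unit u hu => exact (hu.pow m).dvd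
  | mul a i _ hi IH =>
    have hp : Prime i := hi.prime
    have hia : ¬ i ∣ a := fun hd => hi.not_isUnit (hq i (mul_dvd_mul_left i hd))
    obtain ⟨t, rfl⟩ := IH hq.of_mul_right fun p hp hpa => h p hp (dvd_mul_of_dvd_right hpa i)
    have hit : i ^ m ∣ t :=
      hp.pow_dvd_of_dvd_mul_left m (fun hd => hia (hp.dvd_of_dvd_pow hd))
        (h i hp (dvd_mul_right i a))
    rw [mul_pow, mul_comm (i ^ m)]
    exact mul_dvd_mul_left _ hit

theorem Finset.prod_update_const_one {ι M : Type*} [Fintype ι] [DecidableEq ι] [CommMonoid M]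
    (i₀ : ι) (c : M) : ∏ i, update (fun _ => c) i₀ 1 i = c ^ (Fintype.card ι - 1) := by
  rw [Finset.prod_update_of_mem (Finset.mem_univ i₀), one_mul, Finset.prod_const,
    Finset.card_sdiff_of_subset (by simp), Finset.card_univ, Finset.card_singleton]

namespace Matrix

variable {R n : Type*} [CommRing R] [Fintype n] [DecidableEq n]

theorem pow_card_sub_one_dvd_det_of_dvd_rows_ne {p : R} (B : Matrix n n R) (i₀ : n)
    (h : ∀ i ≠ i₀, ∀ j, p ∣ B i j) : p ^ (Fintype.card n - 1) ∣ B.det := by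
  have hfactor : ∀ i j, ∃ b, B i j = update (fun _ => p) i₀ 1 i * b := by
    intro i j
    by_cases hi : i = i₀
    · exact ⟨B i j, by simp [hi]⟩
    · obtain ⟨b, hb⟩ := h i hi j
      exact ⟨b, by simp [hi, hb]⟩
  choose B' hB' using hfactor
  have hB : B = of fun i j => update (fun _ => p) i₀ 1 i * B' i j := by
    ext i j
    exact hB' i j
  rw [hB, det_mul_column (update (fun _ => p) i₀ 1) B', Finset.prod_update_const_one]
  exact dvd_mul_right _ _

/-- Fraction-free elimination of column `j₀` with pivot `M i₀ j₀`; the rows `i ≠ i₀` consist of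
`2 × 2` minors of `M`. -/
def eliminateColumn (M : Matrix n n R) (i₀ j₀ : n) : Matrix n n R :=
  of fun i j => if i = i₀ then M i₀ j else M i₀ j₀ * M i j - M i₀ j * M i j₀

theorem det_eliminateColumn (M : Matrix n n R) (i₀ j₀ : n) :
    (M.eliminateColumn i₀ j₀).det = M i₀ j₀ ^ (Fintype.card n - 1) * M.det := by
  rw [← Finset.prod_update_const_one i₀, ← det_mul_column]
  refine det_eq_of_forall_row_eq_smul_add_const (fun i => if i = i₀ then 0 else -M i j₀) i₀
    (if_pos rfl) fun i j => ?_
  by_cases hi : i = i₀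
  · simp [eliminateColumn, hi]
  · simp only [eliminateColumn, of_apply, hi, ↓reduceIte, ne_eq, not_false_eq_true,
      update_of_ne, update_self, one_mul, neg_mul]
    ring

theorem pow_card_sub_one_dvd_det_of_prime_dvd_minors [IsDomain R] {p : R} (hp : Prime p)
    (M : Matrix n n R) (h : ∀ i j a b, p ∣ M i a * M j b - M i b * M j a) :
    p ^ (Fintype.card n - 1) ∣ M.det := by
  by_cases hpivot : ∃ i₀ j₀, ¬ p ∣ M i₀ j₀
  · obtain ⟨i₀, j₀, hpivot⟩ := hpivot
    have hdvd : p ^ (Fintype.card n - 1) ∣ M i₀ j₀ ^ (Fintype.card n - 1) * M.det := by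
      rw [← det_eliminateColumn]
      refine pow_card_sub_one_dvd_det_of_dvd_rows_ne _ i₀ fun i hi j => ?_
      simpa [eliminateColumn, hi] using h i₀ i j₀ j
    exact hp.pow_dvd_of_dvd_mul_left _ (fun hd => hpivot (hp.dvd_of_dvd_pow hd)) hdvd
  · push Not at hpivot
    cases isEmpty_or_nonempty n
    · simp
    · exact pow_card_sub_one_dvd_det_of_dvd_rows_ne M (Classical.arbitrary n)
        fun i _ j => hpivot i j

theorem pow_card_sub_one_dvd_det_of_squarefree_dvd_minors [IsDomain R]
    [UniqueFactorizationMonoid R] {q : R} (hq : Squarefree q) (M : Matrix n n R)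
    (h : ∀ i j a b, q ∣ M i a * M j b - M i b * M j a) :
    q ^ (Fintype.card n - 1) ∣ M.det :=
  hq.pow_dvd_of_forall_prime_dvd _ fun _ hp hpq =>
    pow_card_sub_one_dvd_det_of_prime_dvd_minors hp M fun i j a b => hpq.trans (h i j a b)

end Matrix

theorem stmt_12_general (n : ℕ) (q : MvPolynomial (Fin 3) ℝ) (hqsf : Squarefree q)
    (N : Matrix (Fin n) (Fin n) (MvPolynomial (Fin 3) ℝ))
    (h2 : ∀ i j k l : Fin n, q ∣ (N i k * N j l - N i l * N j k)) :
    (∀ k : ℕ, 2 ≤ k → k ≤ n → ∀ (r c : Fin k → Fin n),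
      Function.Injective r → Function.Injective c →
      q ^ (k - 1) ∣ (N.submatrix r c).det) ∧
    q ^ (n - 1) ∣ N.det := by
  constructor
  · intro k _ _ r c _ _
    simpa using Matrix.pow_card_sub_one_dvd_det_of_squarefree_dvd_minors hqsf (N.submatrix r c)
      fun i j a b => h2 (r i) (r j) (c a) (c b)
  · simpa using Matrix.pow_card_sub_one_dvd_det_of_squarefree_dvd_minors hqsf N h2

/-- Divisibility of higher minors.
Let `q ∈ ℝ[x,y,z]` be nonzero and square-free and let `N` be an `n × n` matrix of
polynomials such that `q` divides every `2 × 2` minor of `N`.  Then `q^(k-1)` divides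
every `k × k` minor of `N` for `2 ≤ k ≤ n`; in particular `q^(n-1)` divides `det N`. -/
theorem stmt_12 (n : ℕ) (q : MvPolynomial (Fin 3) ℝ) (hq0 : q ≠ 0) (hqsf : Squarefree q)
    (N : Matrix (Fin n) (Fin n) (MvPolynomial (Fin 3) ℝ))
    (h2 : ∀ i j k l : Fin n, q ∣ (N i k * N j l - N i l * N j k)) :
    (∀ k : ℕ, 2 ≤ k → k ≤ n → ∀ (r c : Fin k → Fin n),
      Function.Injective r → Function.Injective c →
      q ^ (k - 1) ∣ (N.submatrix r c).det) ∧
    q ^ (n - 1) ∣ N.det :=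
  stmt_12_general n q hqsf N h2
end

section
/- Let f = y²z − x³ + 6xz² + 3z³ ∈ ℝ[x,y,z] (the homogenization of y² = x³ − 6x − 3, a hyperbolic cubic). Then there do not exist symmetric 3×3 matrices A, B, C with rational entries and a nonzero real constant c such that det(xA + yB + zC) = c·f and e₁A + e₂B + e₃C is positive definite for some point (e₁,e₂,e₃) ∈ ℝ³. -/
open MvPolynomial Polynomial

/-- The hyperbolic cubic `y²z - x³ + 6xz² + 3z³` (homogenization of `y² = x³ - 6x - 3`). -/
noncomputable def cubicF : MvPolynomial (Fin 3) ℝ :=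
  (MvPolynomial.X 1) ^ 2 * MvPolynomial.X 2 - (MvPolynomial.X 0) ^ 3 +
    6 * MvPolynomial.X 0 * (MvPolynomial.X 2) ^ 2 + 3 * (MvPolynomial.X 2) ^ 3

/-!
A symmetric determinantal representation of a plane cubic over a field `K` determines a
`K`-rational point of order two on it (taking the flex `(0:1:0)` as origin). For
`y²z = x³ - 6xz² - 3z³` such points lie on the line `y = 0`, so `t³ - 6t - 3` acquires a root in
`K`; over `ℚ` it has none.

Concretely, write `M = xA + yB + zC`. Since `(0:1:0)` lies on the curve, `B` is singular, say
`Bu = 0`; comparing `y²`-coefficients in a basis starting with `u` gives `uᵀAu = 0 ≠ uᵀCu`.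
In a basis `u, v = Au × Cu, w`, the matrix `M` becomes `[[γz, 0, ℓ], [0, q, s], [ℓ, s, r]]`, with
determinant `γz (qr - s²) - qℓ²`; the slice `z = 0` shows that `q = ax + bz` has no `y`-term.
On the line `q = 0` through `(0:1:0)` the determinant is `-γz s²`, which forces the point
`(-b : 0 : a)` of that line onto the curve.
-/

open Matrix

lemma Matrix.IsSymm.mul_mul_transpose {n K : Type*} [Fintype n] [CommSemiring K]
    {M : Matrix n n K} (hM : M.IsSymm) (R : Matrix n n K) : (R * M * Rᵀ).IsSymm := by
  simp [IsSymm, Matrix.transpose_mul, hM.eq, Matrix.mul_assoc]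

lemma Matrix.mul_mul_transpose_apply {n K : Type*} [Fintype n] [CommSemiring K]
    (R M : Matrix n n K) (i j : n) : (R * M * Rᵀ) i j = R i ⬝ᵥ M *ᵥ R j := by
  rw [mul_mul_apply, transpose_transpose]

lemma exists_det_ne_zero_of_linearIndependent_pair {K : Type*} [Field K] {u v : Fin 3 → K}
    (h : LinearIndependent K ![u, v]) : ∃ a, (Matrix.of ![u, v, a]).det ≠ 0 := by
  obtain ⟨a, ha⟩ := exists_linearIndependent_snoc_of_lt_finrank h (by simp)
  refine ⟨a, ?_⟩
  rw [← isUnit_iff_ne_zero, ← isUnit_iff_isUnit_det, ← linearIndependent_rows_iff_isUnit]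
  have hrow : (Matrix.of ![u, v, a]).row = Fin.snoc ![u, v] a := by
    ext i : 1
    fin_cases i <;> rfl
  rwa [hrow]

structure IsSymmDetRepCubicF {K : Type*} [Field K] (A B C : Matrix (Fin 3) (Fin 3) K) (c : K) :
    Prop where
  isSymm_A : A.IsSymm
  isSymm_B : B.IsSymm
  isSymm_C : C.IsSymm
  ne_zero : c ≠ 0
  det_eq : ∀ x y z : K,
    (x • A + y • B + z • C).det = c * (y ^ 2 * z - x ^ 3 + 6 * x * z ^ 2 + 3 * z ^ 3)

namespace IsSymmDetRepCubicF

variable {K : Type*} [Field K] {A B C : Matrix (Fin 3) (Fin 3) K} {c : K}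

lemma congr (h : IsSymmDetRepCubicF A B C c) {R : Matrix (Fin 3) (Fin 3) K} (hR : R.det ≠ 0) :
    IsSymmDetRepCubicF (R * A * Rᵀ) (R * B * Rᵀ) (R * C * Rᵀ) (R.det ^ 2 * c) where
  isSymm_A := h.isSymm_A.mul_mul_transpose R
  isSymm_B := h.isSymm_B.mul_mul_transpose R
  isSymm_C := h.isSymm_C.mul_mul_transpose R
  ne_zero := mul_ne_zero (pow_ne_zero 2 hR) h.ne_zero
  det_eq x y z := by
    have : x • (R * A * Rᵀ) + y • (R * B * Rᵀ) + z • (R * C * Rᵀ) =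
        R * (x • A + y • B + z • C) * Rᵀ := by
      simp only [Matrix.mul_add, Matrix.add_mul, Matrix.mul_smul, Matrix.smul_mul]
    rw [this, det_mul, det_mul, det_transpose, h.det_eq]
    ring

lemma det_B_eq_zero (h : IsSymmDetRepCubicF A B C c) : B.det = 0 := by
  simpa [h.ne_zero] using h.det_eq 0 1 0

lemma linearIndependent_mulVec (h : IsSymmDetRepCubicF A B C c) {u : Fin 3 → K} (hu0 : u ≠ 0)
    (hu : B *ᵥ u = 0) : LinearIndependent K ![A *ᵥ u, C *ᵥ u] := by
  refine LinearIndependent.pair_iff.mpr fun s t hst => ?_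
  have hsing (y : K) : (s • A + y • B + t • C).det = 0 :=
    exists_mulVec_eq_zero_iff.mp ⟨u, hu0, by simp [add_mulVec, smul_mulVec, hu, hst]⟩
  have h0 := h.det_eq s 0 t
  have h1 := h.det_eq s 1 t
  rw [hsing] at h0 h1
  have ht : t = 0 := by
    simpa [h.ne_zero] using (by linear_combination h0 - h1 : c * t = 0)
  subst ht
  simpa [h.ne_zero] using h0

lemma isotropic_of_col_zero [NeZero (2 : K)] (h : IsSymmDetRepCubicF A B C c) (hB : ∀ i, B i 0 = 0) :
    A 0 0 = 0 ∧ C 0 0 ≠ 0 := by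
  have hB' (i : Fin 3) : B 0 i = 0 := (h.isSymm_B.apply 0 i).symm.trans (hB i)
  have e := h.det_eq
  simp only [det_fin_three, Matrix.add_apply, Matrix.smul_apply, smul_eq_mul, hB, hB',
    h.isSymm_A.apply 0, h.isSymm_A.apply 1 2, h.isSymm_B.apply 1 2, h.isSymm_C.apply 0,
    h.isSymm_C.apply 1 2] at e
  -- the `y²`-coefficient of the determinant is `(x A₀₀ + z C₀₀) (B₁₁ B₂₂ - B₁₂²)`
  have hx : 2 * (A 0 0 * (B 1 1 * B 2 2 - B 1 2 ^ 2)) = 0 := by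
    linear_combination e 1 1 0 + e 1 (-1) 0 - 2 * e 1 0 0
  have hz : 2 * (C 0 0 * (B 1 1 * B 2 2 - B 1 2 ^ 2)) = 2 * c := by
    linear_combination e 0 1 1 + e 0 (-1) 1 - 2 * e 0 0 1
  have hC : C 0 0 * (B 1 1 * B 2 2 - B 1 2 ^ 2) = c := mul_left_cancel₀ two_ne_zero hz
  have hd : B 1 1 * B 2 2 - B 1 2 ^ 2 ≠ 0 := right_ne_zero_of_mul (hC ▸ h.ne_zero)
  refine ⟨?_, left_ne_zero_of_mul (hC ▸ h.ne_zero)⟩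
  exact (mul_eq_zero.mp ((mul_eq_zero.mp hx).resolve_left two_ne_zero)).resolve_right hd

lemma isotropic_of_mulVec_eq_zero [NeZero (2 : K)] (h : IsSymmDetRepCubicF A B C c)
    {u : Fin 3 → K} (hu0 : u ≠ 0) (hu : B *ᵥ u = 0) :
    u ⬝ᵥ A *ᵥ u = 0 ∧ u ⬝ᵥ C *ᵥ u ≠ 0 := by
  obtain ⟨w, hw⟩ := exists_linearIndependent_pair_of_one_lt_finrank
    (by simp : 1 < Module.finrank K (Fin 3 → K)) hu0
  obtain ⟨a, ha⟩ := exists_det_ne_zero_of_linearIndependent_pair hw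
  have := (h.congr ha).isotropic_of_col_zero fun i => by
    rw [mul_mul_transpose_apply]
    exact (congrArg _ hu).trans (dotProduct_zero _)
  rwa [mul_mul_transpose_apply, mul_mul_transpose_apply] at this

lemma exists_root_of_normal_form [NeZero (2 : K)] (h : IsSymmDetRepCubicF A B C c)
    (hB : ∀ i, B i 0 = 0) (hA00 : A 0 0 = 0) (hA10 : A 1 0 = 0) (hC10 : C 1 0 = 0) :
    (-(C 1 1 / A 1 1)) ^ 3 - 6 * (-(C 1 1 / A 1 1)) - 3 = 0 := by
  have hB' (i : Fin 3) : B 0 i = 0 := (h.isSymm_B.apply 0 i).symm.trans (hB i)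
  have hA01 : A 0 1 = 0 := (h.isSymm_A.apply 0 1).symm.trans hA10
  have hC01 : C 0 1 = 0 := (h.isSymm_C.apply 0 1).symm.trans hC10
  have e := h.det_eq
  simp only [det_fin_three, Matrix.add_apply, Matrix.smul_apply, smul_eq_mul, hB, hB', hA00,
    hA10, hC10, hA01, hC01, h.isSymm_A.apply 0 2, h.isSymm_A.apply 1 2, h.isSymm_B.apply 1 2,
    h.isSymm_C.apply 0 2, h.isSymm_C.apply 1 2] at e
  have hA : A 1 1 * A 0 2 ^ 2 = c := by linear_combination -e 1 0 0
  have hA11 : A 1 1 ≠ 0 := left_ne_zero_of_mul (hA ▸ h.ne_zero)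
  have hp : A 0 2 ^ 2 ≠ 0 := right_ne_zero_of_mul (hA ▸ h.ne_zero)
  have hB11 : B 1 1 = 0 := (mul_eq_zero.mp
    (by linear_combination e 1 0 0 - e 1 1 0 : B 1 1 * A 0 2 ^ 2 = 0)).resolve_right hp
  -- on the line `x A₁₁ + z C₁₁ = 0` the determinant is `-z C₀₀ (y B₁₂ + A₁₁ C₁₂ - C₁₁ A₁₂)²`
  have e' (y : K) := e (-C 1 1) y (A 1 1)
  simp only [hB11] at e'
  have hs : 2 * A 1 1 * (C 0 0 * B 1 2 ^ 2) = 2 * A 1 1 * (-c) := by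
    linear_combination -(e' 1 + e' (-1) - 2 * e' 0)
  have hs' : C 0 0 * B 1 2 ^ 2 ≠ 0 := by
    rw [mul_left_cancel₀ (mul_ne_zero two_ne_zero hA11) hs]
    exact neg_ne_zero.mpr h.ne_zero
  have hk : (2 * 2 * A 1 1 * C 0 0 * B 1 2) * (A 1 1 * C 1 2 - C 1 1 * A 1 2) = 0 := by
    linear_combination -(e' 1 - e' (-1))
  have hk' : A 1 1 * C 1 2 - C 1 1 * A 1 2 = 0 := by
    refine (mul_eq_zero.mp hk).resolve_left ?_
    have hg : C 0 0 ≠ 0 := left_ne_zero_of_mul hs'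
    have hb : B 1 2 ≠ 0 := pow_ne_zero_iff two_ne_zero |>.mp (right_ne_zero_of_mul hs')
    exact mul_ne_zero (mul_ne_zero (mul_ne_zero (mul_ne_zero two_ne_zero two_ne_zero) hA11) hg) hb
  have hroot : C 1 1 ^ 3 - 6 * C 1 1 * A 1 1 ^ 2 + 3 * A 1 1 ^ 3 = 0 := by
    refine (mul_eq_zero.mp (?_ : c * _ = 0)).resolve_left h.ne_zero
    linear_combination -(e' 0 + A 1 1 * C 0 0 * (A 1 1 * C 1 2 - C 1 1 * A 1 2) * hk')
  field_simp
  linear_combination -hroot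

theorem exists_root [NeZero (2 : K)] (h : IsSymmDetRepCubicF A B C c) :
    ∃ t : K, t ^ 3 - 6 * t - 3 = 0 := by
  obtain ⟨u, hu0, hu⟩ := exists_mulVec_eq_zero_iff.mpr h.det_B_eq_zero
  obtain ⟨hAu, hCu⟩ := h.isotropic_of_mulVec_eq_zero hu0 hu
  obtain ⟨v, hvA, hvC, hv0⟩ : ∃ v, v ⬝ᵥ A *ᵥ u = 0 ∧ v ⬝ᵥ C *ᵥ u = 0 ∧ v ≠ 0 :=
    ⟨_, (dotProduct_comm _ _).trans (dot_self_cross _ _),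
      (dotProduct_comm _ _).trans (dot_cross_self _ _),
      crossProduct_ne_zero_iff_linearIndependent.mpr (h.linearIndependent_mulVec hu0 hu)⟩
  have huv : LinearIndependent K ![u, v] := by
    refine LinearIndependent.pair_iff.mpr fun s t hst => ?_
    obtain rfl : s = 0 := by
      simpa [add_dotProduct, hvC, hCu] using congrArg (· ⬝ᵥ C *ᵥ u) hst
    simpa [hv0] using hst
  obtain ⟨a, ha⟩ := exists_det_ne_zero_of_linearIndependent_pair huv
  refine ⟨_, (h.congr ha).exists_root_of_normal_form (fun i => ?_) ?_ ?_ ?_⟩ <;>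
    rw [mul_mul_transpose_apply]
  exacts [(congrArg _ hu).trans (dotProduct_zero _), hAu, hvA, hvC]

end IsSymmDetRepCubicF

lemma rat_cubic_ne_zero (r : ℚ) : r ^ 3 - 6 * r - 3 ≠ 0 := by
  intro hr
  have hmonic : (Polynomial.X ^ 3 - 6 * Polynomial.X - 3 : ℤ[X]).Monic := by monicity!
  obtain ⟨n, rfl⟩ : IsLocalization.IsInteger ℤ r := isInteger_of_is_root_of_monic hmonic
    (by simp only [map_sub, map_mul, map_pow, Polynomial.aeval_X, map_ofNat]; exact hr)
  rw [algebraMap_int_eq, eq_intCast] at hr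
  have hn : n ^ 3 - 6 * n - 3 = 0 := by exact_mod_cast hr
  have : n ≤ 2 := by nlinarith [sq_nonneg (n - 2), sq_nonneg (n + 2)]
  have : -2 ≤ n := by nlinarith [sq_nonneg (n - 2), sq_nonneg (n + 2)]
  interval_cases n <;> norm_num at hn

lemma eval_det_pencilPoly {m : ℕ} (A B C : Matrix (Fin m) (Fin m) ℝ) (a : Fin 3 → ℝ) :
    MvPolynomial.eval a (pencilPoly A B C).det = (pencilEval A B C a).det := by
  rw [RingHom.map_det, RingHom.mapMatrix_apply]
  congr 1
  ext i j
  simp [pencilPoly, pencilEval, mul_comm]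

lemma det_pencilEval_ratCast {m : ℕ} (A B C : Matrix (Fin m) (Fin m) ℚ) (x y z : ℚ) :
    (pencilEval (A.map (↑)) (B.map (↑)) (C.map (↑)) ![(x : ℝ), y, z]).det =
      ((x • A + y • B + z • C).det : ℝ) := by
  rw [show ((x • A + y • B + z • C).det : ℝ) = Rat.castHom ℝ (x • A + y • B + z • C).det from rfl,
    RingHom.map_det]
  congr 1
  ext i j
  simp [pencilEval]

/-- No rational definite `3×3` determinantal representation.
There are no rational symmetric `3×3` matrices `A, B, C` and nonzero `c ∈ ℝ` with
`det(xA + yB + zC) = c · (y²z - x³ + 6xz² + 3z³)` such that the pencil is positive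
definite at some point of `ℝ³`. -/
theorem stmt_14 :
    ¬ ∃ (A B C : Matrix (Fin 3) (Fin 3) ℚ),
      A.IsSymm ∧ B.IsSymm ∧ C.IsSymm ∧
      ∃ c : ℝ, c ≠ 0 ∧
        (pencilPoly (A.map fun q => (q : ℝ)) (B.map fun q => (q : ℝ))
            (C.map fun q => (q : ℝ))).det = MvPolynomial.C c * cubicF ∧
        ∃ e : Fin 3 → ℝ,
          (pencilEval (A.map fun q => (q : ℝ)) (B.map fun q => (q : ℝ))
            (C.map fun q => (q : ℝ)) e).PosDef := by
  rintro ⟨A, B, C, hA, hB, hC, c, hc, hdet, -⟩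
  have hval (x y z : ℚ) : (((x • A + y • B + z • C).det : ℚ) : ℝ) =
      c * ((y : ℝ) ^ 2 * z - (x : ℝ) ^ 3 + 6 * x * (z : ℝ) ^ 2 + 3 * (z : ℝ) ^ 3) := by
    have := congrArg (MvPolynomial.eval ![(x : ℝ), y, z]) hdet
    rw [eval_det_pencilPoly, det_pencilEval_ratCast] at this
    simpa [cubicF] using this
  have hcA : c = ((-A.det : ℚ) : ℝ) := by
    have := hval 1 0 0
    simp only [one_smul, zero_smul, add_zero] at this
    push_cast at this ⊢
    linarith
  have hrep : IsSymmDetRepCubicF A B C (-A.det) :=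
    { isSymm_A := hA, isSymm_B := hB, isSymm_C := hC
      ne_zero := fun h0 => hc (by simp [hcA, h0])
      det_eq := fun x y z => by exact_mod_cast hcA ▸ hval x y z }
  obtain ⟨t, ht⟩ := hrep.exists_root
  exact rat_cubic_ne_zero t ht
end

section
/- Fix an integer m ≥ 1 and a point e ∈ ℝ³ with e ≠ 0. Consider the set P of triples (A,B,C) of real symmetric m×m matrices satisfying e₁A + e₂B + e₃C = I_m (the identity matrix), and the map Φ : P → ℝ[x,y,z]_m sending (A,B,C) to det(xA + yB + zC), where ℝ[x,y,z]_m is the finite-dimensional space of homogeneous polynomials of degree m with its Euclidean topology. Then Φ is a proper map (preimages of compact sets are compact); in particular, the image of Φ is a closed subset of ℝ[x,y,z]_m. -/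
open MvPolynomial Polynomial

/-- The space of monic symmetric pencils: triples `(A,B,C)` of real symmetric `m × m`
matrices with `e₀A + e₁B + e₂C = I`. -/
abbrev MonicPencils (m : ℕ) (e : Fin 3 → ℝ) :=
  {T : Matrix (Fin m) (Fin m) ℝ × Matrix (Fin m) (Fin m) ℝ × Matrix (Fin m) (Fin m) ℝ //
    T.1.IsSymm ∧ T.2.1.IsSymm ∧ T.2.2.IsSymm ∧ pencilEval T.1 T.2.1 T.2.2 e = 1}

/-- The determinant map on monic symmetric pencils, composed with the coefficient
embedding of `ℝ[x,y,z]_m` into the product space `(Fin 3 →₀ ℕ) → ℝ`. -/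
noncomputable def pencilDetMap (m : ℕ) (e : Fin 3 → ℝ) (p : MonicPencils m e) :
    (Fin 3 →₀ ℕ) → ℝ :=
  fun mon => MvPolynomial.coeff mon (pencilPoly p.1.1 p.1.2.1 p.1.2.2).det


/-!
Along the line `t • e + v` the determinant restricts to `det (t • 1 + M_v) = charpoly (-M_v)`,
where `M_v = v₀A + v₁B + v₂C`, because `M_e = 1`. Taking for `v` the standard basis vectors, the
coefficients of `det (xA + yB + zC)` therefore determine, linearly, the characteristic polynomials
of `-A`, `-B`, `-C`. Cauchy's bound turns bounds on these coefficients into bounds on eigenvalues,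
and for a symmetric matrix `M` every squared entry is at most `tr (M * M) = ∑ λᵢ²`. Hence the
preimage of a compact set is a closed subset of a box in the finite-dimensional space of triples.
-/

theorem Polynomial.Monic.abs_le_of_isRoot {p : ℝ[X]} (hp : p.Monic) {R : ℝ} (hR0 : 0 ≤ R)
    (hR : ∀ j < p.natDegree, |p.coeff j| ≤ R) {x : ℝ} (hx : p.IsRoot x) : |x| ≤ R + 1 := by
  have hroot := hx.norm_lt_cauchyBound hp.ne_zero
  have hsup : (Finset.range p.natDegree).sup (‖p.coeff ·‖₊) ≤ R.toNNReal :=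
    Finset.sup_le fun j hj => (Real.le_toNNReal_iff_coe_le hR0).2 <| by
      simpa using hR j (Finset.mem_range.1 hj)
  rw [cauchyBound, hp.leadingCoeff, nnnorm_one, div_one] at hroot
  have := hroot.trans_le (add_le_add_left hsup 1)
  rw [← NNReal.coe_lt_coe] at this
  simpa [hR0] using this.le

namespace Matrix.IsHermitian

variable {n : Type*} [Fintype n] [DecidableEq n] {A : Matrix n n ℝ}

theorem trace_mul_self (hA : A.IsHermitian) : (A * A).trace = ∑ i, hA.eigenvalues i ^ 2 := by
  conv_lhs => rw [hA.spectral_theorem, ← map_mul, Unitary.conjStarAlgAut_apply, trace_mul_cycle,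
    Unitary.coe_star_mul_self, one_mul, diagonal_mul_diagonal, trace_diagonal]
  simp [sq]

theorem sq_apply_le_sum_sq_eigenvalues (hA : A.IsHermitian) (i j : n) :
    A i j ^ 2 ≤ ∑ k, hA.eigenvalues k ^ 2 := by
  have htrace : (A * A).trace = ∑ i, ∑ j, A i j ^ 2 := by
    simp only [trace, diag, mul_apply, sq]
    refine Finset.sum_congr rfl fun i _ => Finset.sum_congr rfl fun j _ => ?_
    rw [show A j i = A i j by simpa using hA.apply i j]
  rw [← hA.trace_mul_self, htrace]
  calc A i j ^ 2 ≤ ∑ j, A i j ^ 2 :=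
        Finset.single_le_sum (fun k _ => sq_nonneg (A i k)) (Finset.mem_univ j)
    _ ≤ ∑ i, ∑ j, A i j ^ 2 :=
        Finset.single_le_sum (f := fun i => ∑ j, A i j ^ 2)
          (fun _ _ => Finset.sum_nonneg fun _ _ => sq_nonneg _) (Finset.mem_univ i)

theorem abs_apply_le_of_abs_coeff_charpoly_le (hA : A.IsHermitian) {R : ℝ} (hR0 : 0 ≤ R)
    (hR : ∀ j < Fintype.card n, |A.charpoly.coeff j| ≤ R) (i j : n) :
    |A i j| ≤ √(Fintype.card n * (R + 1) ^ 2) := by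
  have heig : ∀ k, |hA.eigenvalues k| ≤ R + 1 := fun k =>
    A.charpoly_monic.abs_le_of_isRoot hR0 (by simpa using hR)
      (Matrix.mem_spectrum_iff_isRoot_charpoly.1 (hA.eigenvalues_mem_spectrum_real k))
  refine Real.abs_le_sqrt ((hA.sq_apply_le_sum_sq_eigenvalues i j).trans ?_)
  calc ∑ k, hA.eigenvalues k ^ 2 ≤ ∑ _k : n, (R + 1) ^ 2 :=
        Finset.sum_le_sum fun k _ => sq_le_sq' (abs_le.1 (heig k)).1 (abs_le.1 (heig k)).2
    _ = Fintype.card n * (R + 1) ^ 2 := by simp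

end Matrix.IsHermitian

theorem MvPolynomial.linearMap_eq_sum_coeff_smul {R M σ : Type*} [CommSemiring R]
    [AddCommMonoid M] [Module R M] (L : MvPolynomial σ R →ₗ[R] M) {f : MvPolynomial σ R}
    {S : Finset (σ →₀ ℕ)} (hS : f.support ⊆ S) : L f = ∑ d ∈ S, f.coeff d • L (monomial d 1) := by
  conv_lhs => rw [f.as_sum, Finset.sum_subset hS fun d _ hd => by
    rw [notMem_support_iff.1 hd, monomial_zero]]
  simp only [map_sum, ← L.map_smul, smul_monomial, smul_eq_mul, mul_one]

noncomputable def lineCoeffOn {n : ℕ} (S : Finset (Fin n →₀ ℕ)) (e v : Fin n → ℝ) (j : ℕ)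
    (y : (Fin n →₀ ℕ) → ℝ) : ℝ :=
  ∑ d ∈ S, y d * (lineRestrict (monomial d 1) e v).coeff j

theorem continuous_lineCoeffOn {n : ℕ} (S : Finset (Fin n →₀ ℕ)) (e v : Fin n → ℝ) (j : ℕ) :
    Continuous (lineCoeffOn S e v j) := by
  unfold lineCoeffOn
  fun_prop

theorem lineCoeffOn_coeff {n : ℕ} {S : Finset (Fin n →₀ ℕ)} {f : MvPolynomial (Fin n) ℝ}
    (hS : f.support ⊆ S) (e v : Fin n → ℝ) (j : ℕ) :
    lineCoeffOn S e v j (fun d => f.coeff d) = (lineRestrict f e v).coeff j :=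
  (linearMap_eq_sum_coeff_smul
    ((Polynomial.lcoeff ℝ j).comp (MvPolynomial.aeval _).toLinearMap) hS).symm

section Pencil

variable {m : ℕ}

theorem isSymm_pencilEval {A B C : Matrix (Fin m) (Fin m) ℝ} (hA : A.IsSymm) (hB : B.IsSymm)
    (hC : C.IsSymm) (v : Fin 3 → ℝ) : (pencilEval A B C v).IsSymm :=
  ((hA.smul _).add (hB.smul _)).add (hC.smul _)

theorem lineRestrict_det_pencilPoly {A B C : Matrix (Fin m) (Fin m) ℝ} {e : Fin 3 → ℝ}
    (he : pencilEval A B C e = 1) (v : Fin 3 → ℝ) :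
    lineRestrict (pencilPoly A B C).det e v = (-pencilEval A B C v).charpoly := by
  rw [lineRestrict, AlgHom.map_det, Matrix.charpoly]
  congr 1
  refine Matrix.ext fun i j => ?_
  have hij : e 0 * A i j + e 1 * B i j + e 2 * C i j = (1 : Matrix (Fin m) (Fin m) ℝ) i j :=
    congrFun (congrFun he i) j
  have hX : (Matrix.diagonal fun _ => (Polynomial.X : ℝ[X])) i j =
      Polynomial.C ((1 : Matrix (Fin m) (Fin m) ℝ) i j) * Polynomial.X := by
    by_cases h : i = j <;> simp [h, Matrix.one_apply]
  simp only [AlgHom.mapMatrix_apply, Matrix.map_apply, pencilPoly, Matrix.of_apply,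
    MvPolynomial.aeval_C, MvPolynomial.aeval_X, Polynomial.algebraMap_eq, map_add, map_mul,
    Matrix.charmatrix_apply, hX, ← hij, Matrix.neg_apply, pencilEval, Matrix.add_apply,
    Matrix.smul_apply, smul_eq_mul, map_neg]
  ring

/-- Every `pencilPoly A B C` is a specialization of this pencil, so its determinant provides a
common finite support and polynomial (hence continuous) formulas for the coefficients of all the
determinants `det (pencilPoly A B C)`. -/
noncomputable def genericPencil (m : ℕ) :
    Matrix (Fin m) (Fin m) (MvPolynomial (Fin 3) (MvPolynomial (Fin 3 × Fin m × Fin m) ℝ)) :=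
  Matrix.of fun i j => ∑ k, MvPolynomial.C (MvPolynomial.X (k, i, j)) * MvPolynomial.X k

def pencilEntries (A B C : Matrix (Fin m) (Fin m) ℝ) : Fin 3 × Fin m × Fin m → ℝ :=
  fun x => pencilEval A B C (Pi.single x.1 1) x.2.1 x.2.2

theorem det_pencilPoly_eq_map (A B C : Matrix (Fin m) (Fin m) ℝ) :
    (pencilPoly A B C).det =
      MvPolynomial.map (MvPolynomial.eval (pencilEntries A B C)) (genericPencil m).det := by
  rw [RingHom.map_det]
  congr 1
  ext i j
  simp [pencilPoly, genericPencil, pencilEntries, pencilEval, Fin.sum_univ_three]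

theorem support_det_pencilPoly_subset (A B C : Matrix (Fin m) (Fin m) ℝ) :
    (pencilPoly A B C).det.support ⊆ (genericPencil m).det.support := by
  rw [det_pencilPoly_eq_map]
  exact MvPolynomial.support_map_subset _ _

abbrev MatrixTriple (m : ℕ) :=
  Matrix (Fin m) (Fin m) ℝ × Matrix (Fin m) (Fin m) ℝ × Matrix (Fin m) (Fin m) ℝ

noncomputable def detCoeffs (T : MatrixTriple m) : (Fin 3 →₀ ℕ) → ℝ :=
  fun d => (pencilPoly T.1 T.2.1 T.2.2).det.coeff d

theorem continuous_detCoeffs : Continuous (detCoeffs (m := m)) := by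
  refine continuous_pi fun d => ?_
  simp only [detCoeffs, det_pencilPoly_eq_map, MvPolynomial.coeff_map]
  refine (MvPolynomial.continuous_eval _).comp (continuous_pi fun x => ?_)
  unfold pencilEntries pencilEval
  fun_prop

theorem coeff_charpoly_neg_pencilEval {e : Fin 3 → ℝ} (p : MonicPencils m e) (v : Fin 3 → ℝ)
    (j : ℕ) :
    (-pencilEval p.1.1 p.1.2.1 p.1.2.2 v).charpoly.coeff j =
      lineCoeffOn (genericPencil m).det.support e v j (pencilDetMap m e p) := by
  rw [← lineRestrict_det_pencilPoly p.2.2.2.2 v,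
    ← lineCoeffOn_coeff (support_det_pencilPoly_subset _ _ _)]
  rfl

theorem exists_abs_pencilEval_le_of_pencilDetMap_mem {e : Fin 3 → ℝ}
    {K : Set ((Fin 3 →₀ ℕ) → ℝ)} (hK : IsCompact K) :
    ∃ R, ∀ p : MonicPencils m e, pencilDetMap m e p ∈ K → ∀ (k : Fin 3) (i j : Fin m),
      |pencilEval p.1.1 p.1.2.1 p.1.2.2 (Pi.single k 1) i j| ≤ R := by
  let F y (k : Fin 3) (j : Fin m) :=
    lineCoeffOn (genericPencil m).det.support e (Pi.single k 1) j y
  have hF : Continuous F := continuous_pi fun k => continuous_pi fun j => continuous_lineCoeffOn ..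
  obtain ⟨R, hR⟩ := hK.exists_bound_of_continuousOn hF.continuousOn
  refine ⟨√(m * (R + 1) ^ 2), fun p hp k i j => ?_⟩
  obtain ⟨hA, hB, hC, -⟩ := p.2
  have hN : (-pencilEval p.1.1 p.1.2.1 p.1.2.2 (Pi.single k 1)).IsHermitian :=
    Matrix.isHermitian_iff_isSymm.2 (isSymm_pencilEval hA hB hC _).neg
  have hcoeff : ∀ j < Fintype.card (Fin m),
      |(-pencilEval p.1.1 p.1.2.1 p.1.2.2 (Pi.single k 1)).charpoly.coeff j| ≤ R := fun j hj => by
    rw [coeff_charpoly_neg_pencilEval, ← Real.norm_eq_abs]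
    exact (norm_le_pi_norm (F (pencilDetMap m e p) k) ⟨j, by simpa using hj⟩).trans
      ((norm_le_pi_norm (F _) k).trans (hR _ hp))
  have hR0 : 0 ≤ R := (norm_nonneg _).trans (hR _ hp)
  simpa using hN.abs_apply_le_of_abs_coeff_charpoly_le hR0 hcoeff i j

theorem isClosed_setOf_monicPencil (e : Fin 3 → ℝ) :
    IsClosed {T : MatrixTriple m |
      T.1.IsSymm ∧ T.2.1.IsSymm ∧ T.2.2.IsSymm ∧ pencilEval T.1 T.2.1 T.2.2 e = 1} := by
  unfold Matrix.IsSymm pencilEval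
  refine (isClosed_eq ?_ ?_).inter ((isClosed_eq ?_ ?_).inter
    ((isClosed_eq ?_ ?_).inter (isClosed_eq ?_ ?_))) <;> fun_prop

end Pencil

theorem isCompact_setOf_abs_apply_le {ι κ : Type*} (R : ℝ) :
    IsCompact {M : Matrix ι κ ℝ | ∀ i j, |M i j| ≤ R} := by
  simp_rw [abs_le, ← Set.mem_Icc]
  exact isCompact_pi_infinite fun _ => isCompact_pi_infinite fun _ => isCompact_Icc

theorem isProperMap_pencilDetMap (m : ℕ) (e : Fin 3 → ℝ) : IsProperMap (pencilDetMap m e) := by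
  refine isProperMap_iff_isCompact_preimage.2
    ⟨continuous_detCoeffs.comp continuous_subtype_val, fun K hK => ?_⟩
  obtain ⟨R, hR⟩ := exists_abs_pencilEval_le_of_pencilDetMap_mem (m := m) (e := e) hK
  let box := {M : Matrix (Fin m) (Fin m) ℝ | ∀ i j, |M i j| ≤ R}
  have hbox : IsCompact (box ×ˢ box ×ˢ box) :=
    (isCompact_setOf_abs_apply_le R).prod
      ((isCompact_setOf_abs_apply_le R).prod (isCompact_setOf_abs_apply_le R))
  suffices pencilDetMap m e ⁻¹' K = Subtype.val ⁻¹' (detCoeffs ⁻¹' K ∩ box ×ˢ box ×ˢ box) by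
    rw [this]
    exact (isClosed_setOf_monicPencil e).isClosedEmbedding_subtypeVal.isCompact_preimage
      (hbox.inter_left (hK.isClosed.preimage continuous_detCoeffs))
  ext p
  refine ⟨fun hp => ⟨hp, ?_, ?_, ?_⟩, fun hp => hp.1⟩
  · simpa [box, pencilEval] using hR p hp 0
  · simpa [box, pencilEval] using hR p hp 1
  · simpa [box, pencilEval] using hR p hp 2

theorem stmt_19_general (m : ℕ) (e : Fin 3 → ℝ) :
    IsProperMap (pencilDetMap m e) ∧ IsClosed (Set.range (pencilDetMap m e)) :=
  ⟨isProperMap_pencilDetMap m e, (isProperMap_pencilDetMap m e).isClosedMap.isClosed_range⟩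

/-- Properness of the determinant map on monic symmetric pencils.
For `m ≥ 1` and `e ≠ 0`, the map sending a triple `(A,B,C)` of real symmetric `m × m`
matrices with `e₀A + e₁B + e₂C = I` to `det(xA + yB + zC) ∈ ℝ[x,y,z]_m` is proper; in
particular its image is closed. -/
theorem stmt_19 (m : ℕ) (hm : 1 ≤ m) (e : Fin 3 → ℝ) (he : e ≠ 0) :
    IsProperMap (pencilDetMap m e) ∧ IsClosed (Set.range (pencilDetMap m e)) :=
  stmt_19_general m e
end
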